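/- For every λ ∈ [0,1], the weighted shift T on l² with weights a_j = sqrt((j+1)/j) is a 2-isometry, but its generalized λ-mean transform M_λ(T), the weighted shift with weights m_{λ,j} = (a_j^λ a_{j+1}^{1-λ} + a_j^{1-λ} a_{j+1}^λ)/2, is not a 2-isometry. -/

import Mathlib

noncomputable section

/-- The Hilbert space `ℓ²(ℕ, ℂ)`. -/
abbrev Ell2 := lp (fun _ : ℕ => ℂ) 2

/-- The canonical orthonormal basis of `ℓ²` (indexed from `0`; the paper's index `j ≥ 1`
corresponds to our index `j - 1`). -/
noncomputable def e (j : ℕ) : Ell2 := lp.single 2 j 1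

/-- `T` is an `m`-isometry: `∑_{k=0}^m (-1)^k C(m,k) ‖T^k x‖² = 0` for all `x`. -/
def IsMIsometry (T : Ell2 →L[ℂ] Ell2) (m : ℕ) : Prop :=
  ∀ x : Ell2,
    ∑ k ∈ Finset.range (m + 1), (-1 : ℝ) ^ k * (m.choose k : ℝ) * ‖(T ^ k) x‖ ^ 2 = 0

/-! A weighted shift with weights `w` is an `m`-isometry iff
`∑ₖ (-1)^k C(m,k) ∏_{t<k} w_{i+t}² = 0` for every `i`: the defect `∑ₖ (-1)^k C(m,k) ‖T^k x‖²` is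
continuous in `x` and, on finite combinations of the basis vectors, diagonal with exactly these
coefficients. For `a_j² = (j+2)/(j+1)` the case `m = 2`, `a_{j+1}² a_j² - 2 a_j² + 1 = 0`, holds
identically. The `λ`-mean weights are Heinz means `m_j = H_λ(a_j, a_{j+1})`, which lie between the
geometric and the arithmetic mean; hence `m₀² ≥ a₀ a₁ = √3` and `m₁ ≤ (a₁ + a₂)/2`, which gives
`m₀² (2 - m₁²) > 1`, so the relation fails at `j = 0`. -/

open Finset

theorem Orthonormal.norm_sum_smul_sq {ι 𝕜 E : Type*} [RCLike 𝕜] [NormedAddCommGroup E]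
    [InnerProductSpace 𝕜 E] {v : ι → E} (hv : Orthonormal 𝕜 v) (c : ι → 𝕜) (s : Finset ι) :
    ‖∑ i ∈ s, c i • v i‖ ^ 2 = ∑ i ∈ s, ‖c i‖ ^ 2 := by
  apply RCLike.ofReal_injective (K := 𝕜)
  push_cast
  rw [← inner_self_eq_norm_sq_to_K, hv.inner_sum]
  simp [RCLike.conj_mul]

def ell2HilbertBasis : HilbertBasis ℕ ℂ Ell2 :=
  HilbertBasis.ofRepr (LinearIsometryEquiv.refl ℂ Ell2)

theorem coe_ell2HilbertBasis : ⇑ell2HilbertBasis = e :=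
  funext fun i => (ell2HilbertBasis.repr_symm_single i).symm

theorem orthonormal_e : Orthonormal ℂ e :=
  coe_ell2HilbertBasis ▸ ell2HilbertBasis.orthonormal

theorem dense_span_e : Dense (Submodule.span ℂ (Set.range e) : Set Ell2) :=
  coe_ell2HilbertBasis ▸
    Submodule.dense_iff_topologicalClosure_eq_top.2 ell2HilbertBasis.dense_span

def IsWeightedShift (T : Ell2 →L[ℂ] Ell2) (w : ℕ → ℝ) : Prop :=
  ∀ j, T (e j) = (w j : ℂ) • e (j + 1)

namespace IsWeightedShift

variable {T : Ell2 →L[ℂ] Ell2} {w : ℕ → ℝ}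

theorem pow_apply_e (hT : IsWeightedShift T w) (k i : ℕ) :
    (T ^ k) (e i) = ((∏ t ∈ range k, w (i + t) : ℝ) : ℂ) • e (i + k) := by
  induction k with
  | zero => simp
  | succ k ih =>
    rw [pow_succ', mul_apply_eq_comp, ih, map_smul, hT, smul_smul, prod_range_succ]
    push_cast
    rfl

theorem norm_sq_pow_apply_e (hT : IsWeightedShift T w) (k i : ℕ) :
    ‖(T ^ k) (e i)‖ ^ 2 = ∏ t ∈ range k, w (i + t) ^ 2 := by
  rw [hT.pow_apply_e, norm_smul, orthonormal_e.norm_eq_one, mul_one, Complex.norm_real,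
    Real.norm_eq_abs, sq_abs, prod_pow]

theorem norm_sq_pow_apply_sum (hT : IsWeightedShift T w) (k : ℕ) (c : ℕ → ℂ) (s : Finset ℕ) :
    ‖(T ^ k) (∑ i ∈ s, c i • e i)‖ ^ 2 = ∑ i ∈ s, ‖c i‖ ^ 2 * ∏ t ∈ range k, w (i + t) ^ 2 := by
  simp only [map_sum, map_smul, hT.pow_apply_e, smul_smul]
  refine ((orthonormal_e.comp (· + k) (add_left_injective k)).norm_sum_smul_sq _ s).trans ?_
  simp [mul_pow, prod_pow, ← abs_prod, sq_abs]

theorem isMIsometry_iff (hT : IsWeightedShift T w) (m : ℕ) :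
    IsMIsometry T m ↔ ∀ i,
      ∑ k ∈ range (m + 1), (-1 : ℝ) ^ k * (m.choose k : ℝ) * ∏ t ∈ range k, w (i + t) ^ 2 = 0 := by
  refine ⟨fun hTm i => by simpa only [hT.norm_sq_pow_apply_e] using hTm (e i), fun hw x => ?_⟩
  have hclosed : IsClosed {x : Ell2 | ∑ k ∈ range (m + 1),
      (-1 : ℝ) ^ k * (m.choose k : ℝ) * ‖(T ^ k) x‖ ^ 2 = 0} :=
    isClosed_eq (by fun_prop) continuous_const
  refine hclosed.closure_subset_iff.2 (fun y hy => ?_) (dense_span_e x)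
  obtain ⟨c, rfl⟩ := Finsupp.mem_span_range_iff_exists_finsupp.1 hy
  have hdiag : ∑ k ∈ range (m + 1), (-1 : ℝ) ^ k * (m.choose k : ℝ) *
        ‖(T ^ k) (∑ i ∈ c.support, c i • e i)‖ ^ 2
      = ∑ i ∈ c.support, ‖c i‖ ^ 2 * ∑ k ∈ range (m + 1),
          (-1 : ℝ) ^ k * (m.choose k : ℝ) * ∏ t ∈ range k, w (i + t) ^ 2 := by
    simp only [hT.norm_sq_pow_apply_sum, mul_sum]
    rw [sum_comm]
    exact sum_congr rfl fun i _ => sum_congr rfl fun k _ => by ring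
  simp only [Set.mem_ofPred_eq, Finsupp.sum, hdiag, hw, mul_zero, sum_const_zero]

theorem isMIsometry_two_iff (hT : IsWeightedShift T w) :
    IsMIsometry T 2 ↔ ∀ j, w (j + 1) ^ 2 * w j ^ 2 - 2 * w j ^ 2 + 1 = 0 := by
  rw [hT.isMIsometry_iff]
  refine forall_congr' fun j => Eq.congr_left ?_
  norm_num [sum_range_succ, prod_range_succ]
  ring

end IsWeightedShift

def heinzMean (l a b : ℝ) : ℝ := (a ^ l * b ^ (1 - l) + a ^ (1 - l) * b ^ l) / 2

section HeinzMean

variable {l a b : ℝ}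

theorem heinzMean_nonneg (ha : 0 ≤ a) (hb : 0 ≤ b) : 0 ≤ heinzMean l a b := by
  unfold heinzMean
  positivity

theorem mul_le_heinzMean_sq (ha : 0 < a) (hb : 0 < b) : a * b ≤ heinzMean l a b ^ 2 := by
  have hprod : a ^ l * b ^ (1 - l) * (a ^ (1 - l) * b ^ l) = a * b := by
    rw [mul_mul_mul_comm, ← Real.rpow_add ha, ← Real.rpow_add hb, add_sub_cancel,
      sub_add_cancel, Real.rpow_one, Real.rpow_one]
  rw [heinzMean, div_pow, ← hprod]
  linarith [four_mul_le_sq_add (a ^ l * b ^ (1 - l)) (a ^ (1 - l) * b ^ l)]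

theorem heinzMean_le_add_div_two (hl : l ∈ Set.Icc (0 : ℝ) 1) (ha : 0 ≤ a) (hb : 0 ≤ b) :
    heinzMean l a b ≤ (a + b) / 2 := by
  obtain ⟨hl0, hl1⟩ := hl
  have h₁ := Real.geom_mean_le_arith_mean2_weighted hl0 (sub_nonneg.2 hl1) ha hb (by ring)
  have h₂ := Real.geom_mean_le_arith_mean2_weighted (sub_nonneg.2 hl1) hl0 ha hb (by ring)
  rw [heinzMean]
  linarith

end HeinzMean

theorem heinzMean_two_isometry_defect_neg {l a b c : ℝ} (hl : l ∈ Set.Icc (0 : ℝ) 1)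
    (ha : 0 < a) (hb : 0 < b) (hc : 0 < c) (ha2 : a ^ 2 = 2) (hb2 : b ^ 2 = 3 / 2)
    (hc2 : c ^ 2 = 4 / 3) :
    heinzMean l b c ^ 2 * heinzMean l a b ^ 2 - 2 * heinzMean l a b ^ 2 + 1 < 0 := by
  -- `a * b = √3` and `b * c = √2`
  have hab : 1.732 < a * b := by nlinarith [mul_pos ha hb]
  have hbc : b * c < 1.4143 := by nlinarith [mul_pos hb hc]
  have hp : 1.732 < heinzMean l a b ^ 2 := hab.trans_le (mul_le_heinzMean_sq ha hb)
  have hq : heinzMean l b c ^ 2 < 1.4155 := by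
    have := pow_le_pow_left₀ (heinzMean_nonneg hb.le hc.le)
      (heinzMean_le_add_div_two hl hb.le hc.le) 2
    nlinarith
  nlinarith

/-- for every `λ ∈ [0,1]`, the weighted shift with weights `a_j = √((j+1)/j)`
(our index `j` corresponds to the paper's `j + 1`) is a `2`-isometry, but its generalized
`λ`-mean transform — the weighted shift with weights
`m_{λ,j} = (a_j^λ a_{j+1}^{1-λ} + a_j^{1-λ} a_{j+1}^λ)/2` — is not a `2`-isometry. -/
theorem lambda_mean_transform_of_two_isometry_not_two_isometry
    (l : ℝ) (hl : l ∈ Set.Icc (0 : ℝ) 1)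
    (w : ℕ → ℝ) (hw : ∀ j : ℕ, w j = Real.sqrt (((j : ℝ) + 2) / ((j : ℝ) + 1)))
    (T M : Ell2 →L[ℂ] Ell2)
    (hT : ∀ j, T (e j) = ((w j : ℝ) : ℂ) • e (j + 1))
    (hM : ∀ j, M (e j) =
      (((w j ^ l * w (j + 1) ^ (1 - l) + w j ^ (1 - l) * w (j + 1) ^ l) / 2 : ℝ) : ℂ)
        • e (j + 1)) :
    IsMIsometry T 2 ∧ ¬ IsMIsometry M 2 := by
  have hw_pos (j : ℕ) : 0 < w j := by rw [hw]; positivity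
  have hw_sq (j : ℕ) : w j ^ 2 = ((j : ℝ) + 2) / ((j : ℝ) + 1) := by
    rw [hw]; exact Real.sq_sqrt (by positivity)
  have hM_shift : IsWeightedShift M fun j => heinzMean l (w j) (w (j + 1)) := hM
  refine ⟨(IsWeightedShift.isMIsometry_two_iff hT).2 fun j => ?_, fun hM2 => ?_⟩
  · rw [hw_sq, hw_sq]
    push_cast
    field_simp
    ring
  · refine (heinzMean_two_isometry_defect_neg hl (hw_pos 0) (hw_pos 1) (hw_pos 2) ?_ ?_ ?_).ne
      (hM_shift.isMIsometry_two_iff.1 hM2 0)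
    all_goals rw [hw_sq]; norm_num

end
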